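/- Let T be a spanning tree on p nodes with incidence matrix B ∈ R^{p×(p-1)}. For any column index s, let B_{[-s]} be B with its s-th column removed and let β_s = (I - B_{[-s]}(B_{[-s]}^T B_{[-s]})^{-1} B_{[-s]}^T) B_s. Then the vector β_s takes exactly two distinct values β*_1 ≠ β*_2 on its p coordinates, and the index sets V_1 = {j : β_{j,s} = β*_1} and V_2 = {j : β_{j,s} = β*_2} are exactly the vertex sets of the two connected components obtained by deleting edge e_s from T. -/

import Mathlib

/-!
`β` is the residual of projecting column `s` onto the span of the other columns, so it is
orthogonal to them: `β` agrees at the two ends of every edge of `T - e_s`, hence is constant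
on its two components `C₁ ∋ j` and `C₂ ∋ k`. The indicator of either component is also
orthogonal to every column other than `s`, hence to `B_s - β`; pairing gives `|C₁| β_j = 1`
and `|C₂| β_k = -1`, so the two values differ. The same indicators, for the components of
`T - e_t`, show that the columns of `B` are independent, which makes the Gram matrix
invertible.
-/

open scoped Classical

/-- Oriented incidence matrix of a graph on `n+1` vertices with `n` edges. -/
noncomputable def incidenceMat (n : ℕ) (e : Fin n → Fin (n + 1) × Fin (n + 1)) :
    Matrix (Fin (n + 1)) (Fin n) ℝ :=
  Matrix.of fun j s => if (e s).1 = j then 1 else if (e s).2 = j then -1 else 0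

open Finset

namespace Matrix

variable {m n R : Type*} [Fintype m] [Fintype n]

theorem isUnit_transpose_mul_self_of_mulVec_injective [DecidableEq n] [Field R] [LinearOrder R]
    [IsStrictOrderedRing R] {A : Matrix m n R} (hA : Function.Injective A.mulVec) :
    IsUnit (Aᵀ * A) := by
  rw [← mulVec_injective_iff_isUnit, ← coe_mulVecLin, ← LinearMap.ker_eq_bot,
    ker_mulVecLin_transpose_mul_self, LinearMap.ker_eq_bot, coe_mulVecLin]
  exact hA

variable [CommRing R]

theorem transpose_mulVec_one_sub_projection_mulVec [DecidableEq m] [DecidableEq n]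
    {A : Matrix m n R} (hA : IsUnit (Aᵀ * A).det) (b : m → R) :
    Aᵀ *ᵥ ((1 - A * (Aᵀ * A)⁻¹ * Aᵀ) *ᵥ b) = 0 := by
  rw [mulVec_mulVec, Matrix.mul_sub, Matrix.mul_one, ← Matrix.mul_assoc, ← Matrix.mul_assoc,
    mul_nonsing_inv _ hA, Matrix.one_mul, sub_self, zero_mulVec]

theorem dotProduct_one_sub_projection_mulVec [DecidableEq m] {A : Matrix m n R} {f : m → R}
    (hf : f ᵥ* A = 0) (X : Matrix n n R) (b : m → R) :
    f ⬝ᵥ ((1 - A * X * Aᵀ) *ᵥ b) = f ⬝ᵥ b := by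
  rw [sub_mulVec, one_mulVec, dotProduct_sub, Matrix.mul_assoc, ← mulVec_mulVec,
    dotProduct_mulVec, hf, zero_dotProduct, sub_zero]

end Matrix

namespace SimpleGraph

variable {V : Type*} {G H : SimpleGraph V}

theorem Reachable.apply_eq_of_forall_adj {α : Type*} {f : V → α}
    (hf : ∀ x y, G.Adj x y → f x = f y) {u v : V} (h : G.Reachable u v) : f u = f v := by
  rw [reachable_iff_reflTransGen] at h
  induction h with
  | refl => rfl
  | tail _ hadj ih => exact ih.trans (hf _ _ hadj)

theorem Reachable.reachable_or_reachable_of_le_sup_edge {u v w : V} (hle : G ≤ H ⊔ edge u v)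
    (h : G.Reachable u w) : H.Reachable u w ∨ H.Reachable v w := by
  rw [reachable_iff_reflTransGen] at h
  induction h with
  | refl => exact .inl .rfl
  | @tail x y _ hadj ih =>
    rcases (hle hadj : (H ⊔ edge u v).Adj x y) with hH | hedge
    · exact ih.imp (·.trans hH.reachable) (·.trans hH.reachable)
    · obtain ⟨⟨-, rfl⟩ | ⟨-, rfl⟩, -⟩ := (edge_adj _ _ _ _).1 hedge
      · exact .inr .rfl
      · exact .inl .rfl

theorem setOf_apply_eq_eq_setOf_reachable {α : Type*} {f : V → α} {a b : V}
    (hf : ∀ x y, G.Reachable x y → f x = f y)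
    (hcover : ∀ j, G.Reachable a j ∨ G.Reachable b j) (hab : f a ≠ f b) :
    {j | f j = f a} = {j | G.Reachable a j} := by
  ext j
  refine ⟨fun hj => (hcover j).resolve_right fun hbj => hab ?_, fun haj => (hf _ _ haj).symm⟩
  rw [← hj, hf _ _ hbj]

noncomputable def reachIndicator (G : SimpleGraph V) (a : V) : V → ℝ :=
  fun j => if G.Reachable a j then 1 else 0

theorem reachIndicator_eq_of_adj {a x y : V} (h : G.Adj x y) :
    G.reachIndicator a x = G.reachIndicator a y := by
  have : G.Reachable a x ↔ G.Reachable a y :=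
    ⟨fun hx => hx.trans h.reachable, fun hy => hy.trans h.symm.reachable⟩
  simp only [reachIndicator, this]

theorem reachIndicator_dotProduct [Fintype V] {f : V → ℝ}
    (hf : ∀ x y, G.Reachable x y → f x = f y) (a : V) [DecidablePred (G.Reachable a)] :
    G.reachIndicator a ⬝ᵥ f = #{j | G.Reachable a j} * f a := by
  simp only [dotProduct, reachIndicator, ite_mul, one_mul, zero_mul]
  rw [← sum_filter, sum_congr rfl fun j hj => (hf _ _ (mem_filter.1 hj).2).symm, sum_const,
    nsmul_eq_mul]

end SimpleGraph

open SimpleGraph Matrix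

section IncidenceMat

variable {n : ℕ} (e : Fin n → Fin (n + 1) × Fin (n + 1))

def edgeGraph : SimpleGraph (Fin (n + 1)) :=
  fromEdgeSet {x | ∃ s, x = s((e s).1, (e s).2)}

def edgeGraphWithout (s : Fin n) : SimpleGraph (Fin (n + 1)) :=
  fromEdgeSet {x | ∃ t, t ≠ s ∧ x = s((e t).1, (e t).2)}

variable {e}

theorem vecMul_incidenceMat {t : Fin n} (he : (e t).1 ≠ (e t).2) (v : Fin (n + 1) → ℝ) :
    (v ᵥ* incidenceMat n e) t = v (e t).1 - v (e t).2 := by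
  rw [vecMul, dotProduct, Fintype.sum_eq_add _ _ he]
  · simp [incidenceMat, he, sub_eq_add_neg]
  · rintro j ⟨h1, h2⟩
    simp [incidenceMat, Ne.symm h1, Ne.symm h2]

theorem vecMul_incidenceMat_submatrix_eq_zero_iff (he : ∀ t, (e t).1 ≠ (e t).2) (s : Fin n)
    (f : Fin (n + 1) → ℝ) :
    f ᵥ* (incidenceMat n e).submatrix id (Subtype.val : {t // t ≠ s} → Fin n) = 0 ↔
      ∀ x y, (edgeGraphWithout e s).Adj x y → f x = f y := by
  constructor
  · rintro hf x y ⟨⟨t, hts, hxy⟩, -⟩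
    have := sub_eq_zero.1 ((vecMul_incidenceMat (he t) f).symm.trans (congrFun hf ⟨t, hts⟩))
    rcases Sym2.eq_iff.1 hxy with ⟨rfl, rfl⟩ | ⟨rfl, rfl⟩
    exacts [this, this.symm]
  · intro hf
    funext ⟨t, hts⟩
    exact (vecMul_incidenceMat (he t) f).trans
      (sub_eq_zero.2 (hf _ _ ((fromEdgeSet_adj _).2 ⟨⟨t, hts, rfl⟩, he t⟩)))

theorem vecMul_reachIndicator_incidenceMat (he : ∀ t, (e t).1 ≠ (e t).2) {t : Fin n}
    (hsep : ¬ (edgeGraphWithout e t).Reachable (e t).1 (e t).2) :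
    (edgeGraphWithout e t).reachIndicator (e t).1 ᵥ* incidenceMat n e = Pi.single t 1 := by
  funext t'
  rw [vecMul_incidenceMat (he t')]
  rcases eq_or_ne t' t with rfl | ht'
  · simp [reachIndicator, hsep]
  · rw [Pi.single_eq_of_ne ht', sub_eq_zero]
    exact reachIndicator_eq_of_adj ((fromEdgeSet_adj _).2 ⟨⟨t', ht', rfl⟩, he t'⟩)

theorem mulVec_injective_incidenceMat_submatrix (he : ∀ t, (e t).1 ≠ (e t).2)
    (hsep : ∀ t, ¬ (edgeGraphWithout e t).Reachable (e t).1 (e t).2)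
    {ι : Type*} [Fintype ι] {g : ι → Fin n} (hg : Function.Injective g) :
    Function.Injective ((incidenceMat n e).submatrix id g).mulVec := by
  intro c c' h
  funext i
  have hcoord : ∀ c : ι → ℝ,
      (edgeGraphWithout e (g i)).reachIndicator (e (g i)).1 ⬝ᵥ
        ((incidenceMat n e).submatrix id g *ᵥ c) = c i := by
    intro c
    have hrow : (edgeGraphWithout e (g i)).reachIndicator (e (g i)).1 ᵥ*
        (incidenceMat n e).submatrix id g = Pi.single i 1 := by
      funext k
      change ((edgeGraphWithout e (g i)).reachIndicator (e (g i)).1 ᵥ* incidenceMat n e) (g k) = _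
      simp [vecMul_reachIndicator_incidenceMat he (hsep _), Pi.single_apply, hg.eq_iff]
    rw [dotProduct_mulVec, hrow, single_dotProduct, one_mul]
  rw [← hcoord c, h, hcoord c']

theorem edgeGraph_le_sup_edge (s : Fin n) :
    edgeGraph e ≤ edgeGraphWithout e s ⊔ edge (e s).1 (e s).2 := by
  rintro x y ⟨⟨t, hxy⟩, hne⟩
  rcases eq_or_ne t s with rfl | hts
  · exact Or.inr ((edge_adj _ _ _ _).2 ⟨Sym2.eq_iff.1 hxy, hne⟩)
  · exact Or.inl ⟨⟨t, hts, hxy⟩, hne⟩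

theorem injective_sym2_of_isTree (he : ∀ t, (e t).1 ≠ (e t).2) (hT : (edgeGraph e).IsTree) :
    Function.Injective fun t => s((e t).1, (e t).2) := by
  have hedges : (edgeGraph e).edgeFinset = univ.image fun t => s((e t).1, (e t).2) := by
    ext x
    rw [mem_edgeFinset, edgeGraph, edgeSet_fromEdgeSet]
    simp only [Set.mem_sdiff, Set.mem_ofPred_eq, mem_image, mem_univ, true_and, eq_comm (a := x)]
    exact ⟨And.left, fun ⟨t, ht⟩ => ⟨⟨t, ht⟩, by simp [← ht, he t]⟩⟩
  have hcard := hT.card_edgeFinset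
  rw [hedges, Fintype.card_fin, Nat.add_right_cancel_iff] at hcard
  have := card_image_iff.1 (hcard.trans (card_fin n).symm)
  rwa [coe_univ, Set.injOn_univ] at this

theorem not_reachable_edgeGraphWithout (he : ∀ t, (e t).1 ≠ (e t).2)
    (hT : (edgeGraph e).IsTree) (s : Fin n) :
    ¬ (edgeGraphWithout e s).Reachable (e s).1 (e s).2 := by
  have hbridge : (edgeGraph e).IsBridge s((e s).1, (e s).2) :=
    isAcyclic_iff_forall_isBridge.1 hT.isAcyclic ((fromEdgeSet_adj _).2 ⟨⟨s, rfl⟩, he s⟩)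
  refine fun h => isBridge_iff.1 hbridge (h.mono ?_)
  rintro x y ⟨⟨t, hts, hxy⟩, hne⟩
  refine deleteEdges_adj.2 ⟨⟨⟨t, hxy⟩, hne⟩, fun hxs => hts ?_⟩
  exact injective_sym2_of_isTree he hT (hxy.symm.trans hxs)

end IncidenceMat

/-- Traversal-free graph-cut: for a spanning tree `T` with incidence matrix `B`, the
projection `β_s` of column `s` of `B` onto the orthogonal complement of the span of the
other columns takes exactly two distinct values, and the corresponding level sets are
exactly the vertex sets of the two connected components of `T` with edge `e_s` deleted. -/
theorem stmt1 (n : ℕ) (e : Fin n → Fin (n + 1) × Fin (n + 1))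
    (he : ∀ s, (e s).1 ≠ (e s).2)
    (G : SimpleGraph (Fin (n + 1)))
    (hG : G = SimpleGraph.fromEdgeSet {x | ∃ s, x = s((e s).1, (e s).2)})
    (hT : G.IsTree) (s : Fin n) :
    let B := incidenceMat n e
    let B' : Matrix (Fin (n + 1)) {t : Fin n // t ≠ s} ℝ :=
      B.submatrix id (fun t => t.1)
    let β : Fin (n + 1) → ℝ :=
      (1 - B' * (B'.transpose * B')⁻¹ * B'.transpose).mulVec (fun j => B j s)
    let Gdel : SimpleGraph (Fin (n + 1)) :=
      SimpleGraph.fromEdgeSet {x | ∃ t, t ≠ s ∧ x = s((e t).1, (e t).2)}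
    ∃ b₁ b₂ : ℝ, b₁ ≠ b₂ ∧ (∀ j, β j = b₁ ∨ β j = b₂) ∧
      {j | β j = b₁} = {j | Gdel.Reachable (e s).1 j} ∧
      {j | β j = b₂} = {j | Gdel.Reachable (e s).2 j} := by
  intro B B' β Gdel
  have hGdel : Gdel = edgeGraphWithout e s := rfl
  clear_value Gdel
  subst hG hGdel
  have hsep := not_reachable_edgeGraphWithout he hT
  have hperp : β ᵥ* B' = 0 := by
    rw [← mulVec_transpose]
    refine transpose_mulVec_one_sub_projection_mulVec ((isUnit_iff_isUnit_det _).1 ?_) _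
    exact isUnit_transpose_mul_self_of_mulVec_injective
      (mulVec_injective_incidenceMat_submatrix he hsep Subtype.val_injective)
  have hconst : ∀ x y, (edgeGraphWithout e s).Reachable x y → β x = β y := fun _ _ =>
    Reachable.apply_eq_of_forall_adj ((vecMul_incidenceMat_submatrix_eq_zero_iff he s β).1 hperp)
  have hcard (x) : (#{j | (edgeGraphWithout e s).Reachable x j} : ℝ) * β x =
      ((edgeGraphWithout e s).reachIndicator x ᵥ* B) s := by
    rw [← reachIndicator_dotProduct hconst]
    exact dotProduct_one_sub_projection_mulVec
      ((vecMul_incidenceMat_submatrix_eq_zero_iff he s _).2 fun _ _ => reachIndicator_eq_of_adj)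
      _ _
  have h₁ := hcard (e s).1
  have h₂ := hcard (e s).2
  rw [vecMul_incidenceMat (he s)] at h₁ h₂
  have hsep' : ¬ (edgeGraphWithout e s).Reachable (e s).2 (e s).1 := fun h => hsep s h.symm
  simp only [reachIndicator, Reachable.rfl, ↓reduceIte, hsep s, hsep', sub_zero, zero_sub]
    at h₁ h₂
  have hne : β (e s).1 ≠ β (e s).2 :=
    ((neg_of_mul_neg_right (h₂ ▸ neg_one_lt_zero) (Nat.cast_nonneg _)).trans
      (pos_of_mul_pos_right (h₁ ▸ one_pos) (Nat.cast_nonneg _))).ne'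
  have hcover (j) : (edgeGraphWithout e s).Reachable (e s).1 j ∨
      (edgeGraphWithout e s).Reachable (e s).2 j :=
    (hT.connected _ j).reachable_or_reachable_of_le_sup_edge (edgeGraph_le_sup_edge s)
  refine ⟨_, _, hne, fun j => (hcover j).imp (hconst _ _ · |>.symm) (hconst _ _ · |>.symm),
    setOf_apply_eq_eq_setOf_reachable hconst hcover hne,
    setOf_apply_eq_eq_setOf_reachable hconst (fun j => (hcover j).symm) hne.symm⟩
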